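/- arXiv:1805.03032 — 3 statements merged into one kernel-verified Lean document; each statement's English description precedes it below -/
import Mathlib

section
/- Let C be a category and let A, B be monads on C. Let κ be a natural transformation with components κ_X : B.obj (A.obj X) ⟶ A.obj (B.obj X) satisfying the four distributive-law axioms (U1) κ_X ∘ η^B_{A.obj X} = A.map (η^B_X), (U2) κ_X ∘ B.map (η^A_X) = η^A_{B.obj X}, (M1) κ_X ∘ μ^B_{A.obj X} = A.map (μ^B_X) ∘ κ_{B.obj X} ∘ B.map (κ_X), and (M2) κ_X ∘ B.map (μ^A_X) = μ^A_{B.obj X} ∘ A.map (κ_X) ∘ κ_{A.obj X}. Then the endofunctor X ↦ A.obj (B.obj X), equipped with unit η_X := A.map (η^B_X) ∘ η^A_X and multiplication μ_X := A.map (μ^B_X) ∘ μ^A_{B.obj (B.obj X)} ∘ A.map (κ_{B.obj X}), satisfies the monad laws: both unit laws μ_X ∘ η_{A.obj (B.obj X)} = id, μ_X ∘ (A ⋙ B applied to η)_X = id, and associativity of μ. -/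
open CategoryTheory

universe v u

/-- A distributive law `κ : A;B → B;A` between two monads `A`, `B` on a category `C`
(given as a family of components together with naturality and the four
distributive-law axioms) makes the endofunctor `X ↦ A.obj (B.obj X)` into a monad:
the unit `η_X := A.map (B.η.app X) ∘ A.η.app X` and the multiplication
`μ_X := A.map (B.μ.app X) ∘ A.μ.app (B.obj (B.obj X)) ∘ A.map (κ (B.obj X))`
satisfy both unit laws and associativity. -/
theorem composite_monad_laws {C : Type u} [Category.{v} C] (A B : Monad C)
    (κ : ∀ X : C, B.obj (A.obj X) ⟶ A.obj (B.obj X))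
    (κnat : ∀ {X Y : C} (f : X ⟶ Y), B.map (A.map f) ≫ κ Y = κ X ≫ A.map (B.map f))
    (hU1 : ∀ X : C, B.η.app (A.obj X) ≫ κ X = A.map (B.η.app X))
    (hU2 : ∀ X : C, B.map (A.η.app X) ≫ κ X = A.η.app (B.obj X))
    (hM1 : ∀ X : C, B.μ.app (A.obj X) ≫ κ X
      = B.map (κ X) ≫ κ (B.obj X) ≫ A.map (B.μ.app X))
    (hM2 : ∀ X : C, B.map (A.μ.app X) ≫ κ X
      = κ (A.obj X) ≫ A.map (κ X) ≫ A.μ.app (B.obj X)) :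
    -- left unit law: μ_X ∘ η_{A.obj (B.obj X)} = id
    (∀ X : C,
      (A.η.app (A.obj (B.obj X)) ≫ A.map (B.η.app (A.obj (B.obj X)))) ≫
        (A.map (κ (B.obj X)) ≫ A.μ.app (B.obj (B.obj X)) ≫ A.map (B.μ.app X))
      = 𝟙 (A.obj (B.obj X))) ∧
    -- right unit law: μ_X ∘ (A ⋙ B applied to η)_X = id
    (∀ X : C,
      A.map (B.map (A.η.app X ≫ A.map (B.η.app X))) ≫
        (A.map (κ (B.obj X)) ≫ A.μ.app (B.obj (B.obj X)) ≫ A.map (B.μ.app X))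
      = 𝟙 (A.obj (B.obj X))) ∧
    -- associativity of μ
    (∀ X : C,
      A.map (B.map (A.map (κ (B.obj X)) ≫ A.μ.app (B.obj (B.obj X)) ≫ A.map (B.μ.app X))) ≫
        (A.map (κ (B.obj X)) ≫ A.μ.app (B.obj (B.obj X)) ≫ A.map (B.μ.app X))
      = (A.map (κ (B.obj (A.obj (B.obj X)))) ≫
          A.μ.app (B.obj (B.obj (A.obj (B.obj X)))) ≫
          A.map (B.μ.app (A.obj (B.obj X)))) ≫
        (A.map (κ (B.obj X)) ≫ A.μ.app (B.obj (B.obj X)) ≫ A.map (B.μ.app X))) := by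
  refine ⟨fun X => ?_, fun X => ?_, fun X => ?_⟩
  · -- left unit
    simp only [Functor.map_comp, Category.assoc]
    slice_lhs 2 3 => rw [← Functor.map_comp, hU1]
    slice_lhs 2 3 => rw [← Functor.comp_map, A.μ.naturality]
    simp
    rw [← Functor.map_comp, Monad.left_unit]; simp
  · -- right unit
    simp only [Functor.map_comp, Category.assoc]
    slice_lhs 2 3 => rw [← Functor.map_comp, κnat, Functor.map_comp]
    slice_lhs 1 2 => rw [← Functor.map_comp, hU2]
    slice_lhs 2 3 => rw [← Functor.comp_map, A.μ.naturality]
    simp [← Functor.map_comp]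
  · -- associativity
    simp only [Functor.map_comp, Category.assoc]
    slice_lhs 3 4 => rw [← Functor.map_comp, κnat, Functor.map_comp]
    slice_lhs 4 5 => rw [← Functor.comp_map, A.μ.naturality]
    slice_lhs 2 3 => rw [← Functor.map_comp, hM2, Functor.map_comp, Functor.map_comp]
    slice_lhs 4 5 => rw [Monad.assoc]
    slice_lhs 3 4 => rw [← Functor.comp_map, A.μ.naturality]
    slice_lhs 1 2 => rw [← Functor.map_comp, κnat, Functor.map_comp]
    slice_lhs 2 3 => rw [← Functor.comp_map, A.μ.naturality]
    slice_lhs 6 7 => rw [← Functor.map_comp, Monad.assoc, Functor.map_comp]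
    slice_rhs 3 4 => rw [← Functor.map_comp, hM1, Functor.map_comp, Functor.map_comp]
    slice_rhs 5 6 => rw [← Functor.comp_map, A.μ.naturality]
    simp only [Category.assoc]
end

section
/- Let F, G, H be monads on a category C. Suppose given a distributive law λ of type H;F → F;H (components λ_X : F.obj (H.obj X) ⟶ H.obj (F.obj X)), a distributive law χ of type H;G → G;H (components χ_X : G.obj (H.obj X) ⟶ H.obj (G.obj X)), and a distributive law ψ of type G;F → F;G (components ψ_X : F.obj (G.obj X) ⟶ G.obj (F.obj X)), satisfying the Yang–Baxter equation: for every object X, χ_{F.obj X} ∘ G.map (λ_X) ∘ ψ_{H.obj X} = H.map (ψ_X) ∘ λ_{G.obj X} ∘ F.map (χ_X). Then: (1) the natural transformation α with components α_X := χ_{F.obj X} ∘ G.map (λ_X) : G.obj (F.obj (H.obj X)) ⟶ H.obj (G.obj (F.obj X)) is a distributive law of type H;K → K;H, where K is the composite monad F;G induced by ψ (underlying endofunctor X ↦ G.obj (F.obj X)); and (2) the natural transformation β with components β_X := H.map (ψ_X) ∘ λ_{G.obj X} : F.obj (H.obj (G.obj X)) ⟶ H.obj (G.obj (F.obj X)) is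 a distributive law of type L;F → F;L, where L is the composite monad G;H induced by χ (underlying endofunctor X ↦ H.obj (G.obj X)). -/
open CategoryTheory

universe v u

variable {C : Type u} [Category.{v} C]

/-- Unit of the composite monad `F;G` (underlying endofunctor `X ↦ G.obj (F.obj X)`)
induced by a distributive law `ψ : G;F → F;G`. -/
def unitK (F G : Monad C) (X : C) : X ⟶ G.obj (F.obj X) :=
  G.η.app X ≫ G.map (F.η.app X)

/-- Multiplication of the composite monad `F;G` induced by a distributive law
`ψ : G;F → F;G` with components `psi X : F.obj (G.obj X) ⟶ G.obj (F.obj X)`. -/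
def mulK (F G : Monad C) (psi : ∀ X : C, F.obj (G.obj X) ⟶ G.obj (F.obj X)) (X : C) :
    G.obj (F.obj (G.obj (F.obj X))) ⟶ G.obj (F.obj X) :=
  G.map (psi (F.obj X)) ≫ G.μ.app (F.obj (F.obj X)) ≫ G.map (F.μ.app X)

/-- Unit of the composite monad `G;H` (underlying endofunctor `X ↦ H.obj (G.obj X)`)
induced by a distributive law `χ : H;G → G;H`. -/
def unitL (G H : Monad C) (X : C) : X ⟶ H.obj (G.obj X) :=
  H.η.app X ≫ H.map (G.η.app X)

/-- Multiplication of the composite monad `G;H` induced by a distributive law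
`χ : H;G → G;H` with components `chi X : G.obj (H.obj X) ⟶ H.obj (G.obj X)`. -/
def mulL (G H : Monad C) (chi : ∀ X : C, G.obj (H.obj X) ⟶ H.obj (G.obj X)) (X : C) :
    H.obj (G.obj (H.obj (G.obj X))) ⟶ H.obj (G.obj X) :=
  H.map (chi (G.obj X)) ≫ H.μ.app (G.obj (G.obj X)) ≫ H.map (G.μ.app X)

/-- The components `α_X := χ_{F.obj X} ∘ G.map (λ_X)`. -/
def alphaApp (F G H : Monad C) (l : ∀ X : C, F.obj (H.obj X) ⟶ H.obj (F.obj X))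
    (chi : ∀ X : C, G.obj (H.obj X) ⟶ H.obj (G.obj X)) (X : C) :
    G.obj (F.obj (H.obj X)) ⟶ H.obj (G.obj (F.obj X)) :=
  G.map (l X) ≫ chi (F.obj X)

/-- The components `β_X := H.map (ψ_X) ∘ λ_{G.obj X}`. -/
def betaApp (F G H : Monad C) (l : ∀ X : C, F.obj (H.obj X) ⟶ H.obj (F.obj X))
    (psi : ∀ X : C, F.obj (G.obj X) ⟶ G.obj (F.obj X)) (X : C) :
    F.obj (H.obj (G.obj X)) ⟶ H.obj (G.obj (F.obj X)) :=
  l (G.obj X) ≫ H.map (psi X)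


private lemma muNat (T : Monad C) {X Y : C} (f : X ⟶ Y) :
    T.map (T.map f) ≫ T.μ.app Y = T.μ.app X ≫ T.map f := by
  simpa using T.μ.naturality f

private lemma etaNat (T : Monad C) {X Y : C} (f : X ⟶ Y) :
    f ≫ T.η.app Y = T.η.app X ≫ T.map f := by
  simpa using T.η.naturality f

/-- Given monads `F`, `G`, `H` on `C`, distributive laws `λ : H;F → F;H`,
`χ : H;G → G;H` and `ψ : G;F → F;G` satisfying the Yang–Baxter equation, the
natural transformation `α` with components `α_X := χ_{F.obj X} ∘ G.map (λ_X)` is a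
distributive law of type `H;K → K;H` where `K` is the composite monad `F;G` induced
by `ψ`, and the natural transformation `β` with components
`β_X := H.map (ψ_X) ∘ λ_{G.obj X}` is a distributive law of type `L;F → F;L`
where `L` is the composite monad `G;H` induced by `χ`. -/
theorem yangBaxter_distributive_laws (F G H : Monad C)
    -- λ : H;F → F;H
    (l : ∀ X : C, F.obj (H.obj X) ⟶ H.obj (F.obj X))
    (lnat : ∀ {X Y : C} (f : X ⟶ Y), F.map (H.map f) ≫ l Y = l X ≫ H.map (F.map f))
    (lU1 : ∀ X : C, F.η.app (H.obj X) ≫ l X = H.map (F.η.app X))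
    (lU2 : ∀ X : C, F.map (H.η.app X) ≫ l X = H.η.app (F.obj X))
    (lM1 : ∀ X : C, F.μ.app (H.obj X) ≫ l X
      = F.map (l X) ≫ l (F.obj X) ≫ H.map (F.μ.app X))
    (lM2 : ∀ X : C, F.map (H.μ.app X) ≫ l X
      = l (H.obj X) ≫ H.map (l X) ≫ H.μ.app (F.obj X))
    -- χ : H;G → G;H
    (chi : ∀ X : C, G.obj (H.obj X) ⟶ H.obj (G.obj X))
    (chinat : ∀ {X Y : C} (f : X ⟶ Y), G.map (H.map f) ≫ chi Y = chi X ≫ H.map (G.map f))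
    (chiU1 : ∀ X : C, G.η.app (H.obj X) ≫ chi X = H.map (G.η.app X))
    (chiU2 : ∀ X : C, G.map (H.η.app X) ≫ chi X = H.η.app (G.obj X))
    (chiM1 : ∀ X : C, G.μ.app (H.obj X) ≫ chi X
      = G.map (chi X) ≫ chi (G.obj X) ≫ H.map (G.μ.app X))
    (chiM2 : ∀ X : C, G.map (H.μ.app X) ≫ chi X
      = chi (H.obj X) ≫ H.map (chi X) ≫ H.μ.app (G.obj X))
    -- ψ : G;F → F;G
    (psi : ∀ X : C, F.obj (G.obj X) ⟶ G.obj (F.obj X))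
    (psinat : ∀ {X Y : C} (f : X ⟶ Y), F.map (G.map f) ≫ psi Y = psi X ≫ G.map (F.map f))
    (psiU1 : ∀ X : C, F.η.app (G.obj X) ≫ psi X = G.map (F.η.app X))
    (psiU2 : ∀ X : C, F.map (G.η.app X) ≫ psi X = G.η.app (F.obj X))
    (psiM1 : ∀ X : C, F.μ.app (G.obj X) ≫ psi X
      = F.map (psi X) ≫ psi (F.obj X) ≫ G.map (F.μ.app X))
    (psiM2 : ∀ X : C, F.map (G.μ.app X) ≫ psi X
      = psi (G.obj X) ≫ G.map (psi X) ≫ G.μ.app (F.obj X))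
    -- Yang–Baxter equation
    (yb : ∀ X : C, psi (H.obj X) ≫ G.map (l X) ≫ chi (F.obj X)
      = F.map (chi X) ≫ l (G.obj X) ≫ H.map (psi X)) :
    -- (1) α is a distributive law of type H;K → K;H, where K = F;G induced by ψ
    ((∀ {X Y : C} (f : X ⟶ Y),
        G.map (F.map (H.map f)) ≫ alphaApp F G H l chi Y
          = alphaApp F G H l chi X ≫ H.map (G.map (F.map f))) ∧
     (∀ X : C, unitK F G (H.obj X) ≫ alphaApp F G H l chi X = H.map (unitK F G X)) ∧
     (∀ X : C, G.map (F.map (H.η.app X)) ≫ alphaApp F G H l chi X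
        = H.η.app (G.obj (F.obj X))) ∧
     (∀ X : C, mulK F G psi (H.obj X) ≫ alphaApp F G H l chi X
        = G.map (F.map (alphaApp F G H l chi X)) ≫
          alphaApp F G H l chi (G.obj (F.obj X)) ≫ H.map (mulK F G psi X)) ∧
     (∀ X : C, G.map (F.map (H.μ.app X)) ≫ alphaApp F G H l chi X
        = alphaApp F G H l chi (H.obj X) ≫ H.map (alphaApp F G H l chi X) ≫
          H.μ.app (G.obj (F.obj X)))) ∧
    -- (2) β is a distributive law of type L;F → F;L, where L = G;H induced by χ
    ((∀ {X Y : C} (f : X ⟶ Y),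
        F.map (H.map (G.map f)) ≫ betaApp F G H l psi Y
          = betaApp F G H l psi X ≫ H.map (G.map (F.map f))) ∧
     (∀ X : C, F.η.app (H.obj (G.obj X)) ≫ betaApp F G H l psi X
        = H.map (G.map (F.η.app X))) ∧
     (∀ X : C, F.map (unitL G H X) ≫ betaApp F G H l psi X = unitL G H (F.obj X)) ∧
     (∀ X : C, F.μ.app (H.obj (G.obj X)) ≫ betaApp F G H l psi X
        = F.map (betaApp F G H l psi X) ≫ betaApp F G H l psi (F.obj X) ≫
          H.map (G.map (F.μ.app X))) ∧
     (∀ X : C, F.map (mulL G H chi X) ≫ betaApp F G H l psi X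
        = betaApp F G H l psi (H.obj (G.obj X)) ≫
          H.map (G.map (betaApp F G H l psi X)) ≫ mulL G H chi (F.obj X))) := by
  refine ⟨⟨?_, ?_, ?_, ?_, ?_⟩, ⟨?_, ?_, ?_, ?_, ?_⟩⟩
  · -- α naturality
    intro X Y f
    simp only [alphaApp, Category.assoc]
    rw [← Category.assoc, ← G.map_comp, lnat, G.map_comp, Category.assoc,
      chinat (F.map f)]
  · -- α U1
    intro X
    simp only [alphaApp, unitK, Category.assoc]
    rw [← Category.assoc (G.map _), ← G.map_comp, lU1, ← Category.assoc, ← etaNat,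
      Category.assoc, chiU1, ← H.map_comp, etaNat]
    rfl
  · -- α U2
    intro X
    simp only [alphaApp]
    rw [← Category.assoc, ← G.map_comp, lU2, chiU2]
  · -- α M1
    intro X
    simp only [alphaApp, mulK, Functor.map_comp, Category.assoc]
    slice_lhs 3 4 => rw [← G.map_comp, lM1]
    simp only [Functor.map_comp, Category.assoc]
    slice_lhs 5 6 => rw [chinat (F.μ.app X)]
    simp only [Functor.comp_obj]
    slice_lhs 2 3 => rw [← muNat G (F.map (l X))]
    slice_lhs 3 4 => rw [← muNat G (l (F.obj X))]
    slice_lhs 4 5 => rw [chiM1]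
    slice_rhs 4 5 => rw [← chinat (psi (F.obj X))]
    slice_lhs 1 2 => rw [← G.map_comp, ← psinat (l X), G.map_comp]
    slice_lhs 2 4 => rw [← G.map_comp, ← G.map_comp, yb (F.obj X)]
    simp only [Functor.map_comp, Category.assoc]
  · -- α M2
    intro X
    simp only [alphaApp, Functor.map_comp, Category.assoc]
    slice_lhs 1 2 => rw [← G.map_comp, lM2]
    simp only [Functor.map_comp, Category.assoc]
    slice_lhs 3 4 => rw [chiM2]
    slice_lhs 2 3 => rw [chinat (l X)]
    simp only [Category.assoc]
  · -- β naturality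
    intro X Y f
    simp only [betaApp, Category.assoc]
    rw [← Category.assoc, lnat, Category.assoc, ← H.map_comp, psinat, H.map_comp]
  · -- β U1
    intro X
    simp only [betaApp]
    rw [← Category.assoc, lU1, ← H.map_comp, psiU1]
  · -- β U2
    intro X
    simp only [betaApp, unitL, Functor.map_comp, Category.assoc]
    slice_lhs 2 3 => rw [lnat]
    slice_lhs 1 2 => rw [lU2]
    slice_lhs 2 3 => rw [← H.map_comp, psiU2]
  · -- β M1
    intro X
    simp only [betaApp, Functor.map_comp, Category.assoc]
    rw [← Category.assoc, lM1]
    simp only [Category.assoc]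
    slice_lhs 3 4 => rw [← H.map_comp, psiM1]
    simp only [Functor.map_comp, Category.assoc]
    slice_lhs 2 3 => rw [← lnat]
    simp only [Category.assoc]
  · -- β M2
    intro X
    simp only [betaApp, mulL, Functor.map_comp, Category.assoc]
    slice_lhs 3 4 => rw [lnat]
    slice_lhs 2 3 => rw [lM2]
    simp only [Functor.map_comp, Category.assoc]
    slice_lhs 1 2 => rw [lnat]
    slice_lhs 4 5 =>
      rw [← muNat H (X := F.obj (G.obj (G.obj X))) (F.map (G.μ.app X))]
    slice_lhs 5 6 => rw [← muNat H (psi X)]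
    slice_lhs 4 5 => rw [← H.map_comp, ← H.map_comp, psiM2]
    simp only [Functor.map_comp, Category.assoc]
    slice_rhs 6 7 =>
      rw [← muNat H (X := G.obj (G.obj (F.obj X))) (G.μ.app (F.obj X))]
    slice_rhs 4 5 => rw [← H.map_comp, chinat (psi X), H.map_comp]
    slice_rhs 2 4 => rw [← H.map_comp, ← H.map_comp, yb (G.obj X)]
    simp only [Functor.map_comp, Category.assoc]
end

section
/- Let F, G, H be monads on a category C and let λ be a distributive law of type F;H → H;F (components λ_X : H.obj (F.obj X) ⟶ F.obj (H.obj X)). Let σ : F ⟶ G be a monad morphism each of whose components σ_X is an epimorphism, and suppose the functors F and H preserve epimorphisms. Let λ' be a natural transformation with components λ'_X : H.obj (G.obj X) ⟶ G.obj (H.obj X) such that λ'_X ∘ H.map (σ_X) = σ_{H.obj X} ∘ λ_X for every object X. Then λ' is a distributive law of type G;H → H;G, i.e., it satisfies the four distributive-law axioms (U1), (U2), (M1), (M2) with respect to the monads G and H. -/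
open CategoryTheory

universe v u

/-- Quotients of distributive laws: given monads `F`, `G`, `H` on `C`, a distributive
law `λ : F;H → H;F` (components `l X : H.obj (F.obj X) ⟶ F.obj (H.obj X)`), a monad
morphism `σ : F ⟶ G` with epimorphic components, with `F` and `H` preserving
epimorphisms, any natural transformation `λ'` with components
`l' X : H.obj (G.obj X) ⟶ G.obj (H.obj X)` satisfying
`λ'_X ∘ H.map (σ_X) = σ_{H.obj X} ∘ λ_X` is a distributive law of type `G;H → H;G`,
i.e. it satisfies the four distributive-law axioms (U1), (U2), (M1), (M2) with
respect to the monads `G` and `H`. -/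
theorem quotient_distributive_law {C : Type u} [Category.{v} C] (F G H : Monad C)
    [F.toFunctor.PreservesEpimorphisms] [H.toFunctor.PreservesEpimorphisms]
    -- λ : F;H → H;F is a distributive law
    (l : ∀ X : C, H.obj (F.obj X) ⟶ F.obj (H.obj X))
    (lnat : ∀ {X Y : C} (f : X ⟶ Y), H.map (F.map f) ≫ l Y = l X ≫ F.map (H.map f))
    (lU1 : ∀ X : C, H.η.app (F.obj X) ≫ l X = F.map (H.η.app X))
    (lU2 : ∀ X : C, H.map (F.η.app X) ≫ l X = F.η.app (H.obj X))
    (lM1 : ∀ X : C, H.μ.app (F.obj X) ≫ l X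
      = H.map (l X) ≫ l (H.obj X) ≫ F.map (H.μ.app X))
    (lM2 : ∀ X : C, H.map (F.μ.app X) ≫ l X
      = l (F.obj X) ≫ F.map (l X) ≫ F.μ.app (H.obj X))
    -- σ : F ⟶ G is a monad morphism with epimorphic components
    (σ : ∀ X : C, F.obj X ⟶ G.obj X)
    (σnat : ∀ {X Y : C} (f : X ⟶ Y), F.map f ≫ σ Y = σ X ≫ G.map f)
    (ση : ∀ X : C, F.η.app X ≫ σ X = G.η.app X)
    (σμ : ∀ X : C, F.μ.app X ≫ σ X = σ (F.obj X) ≫ G.map (σ X) ≫ G.μ.app X)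
    (σepi : ∀ X : C, Epi (σ X))
    -- λ' is a natural transformation compatible with λ along σ
    (l' : ∀ X : C, H.obj (G.obj X) ⟶ G.obj (H.obj X))
    (l'nat : ∀ {X Y : C} (f : X ⟶ Y), H.map (G.map f) ≫ l' Y = l' X ≫ G.map (H.map f))
    (hcompat : ∀ X : C, H.map (σ X) ≫ l' X = l X ≫ σ (H.obj X)) :
    -- λ' is a distributive law of type G;H → H;G
    (∀ X : C, H.η.app (G.obj X) ≫ l' X = G.map (H.η.app X)) ∧
    (∀ X : C, H.map (G.η.app X) ≫ l' X = G.η.app (H.obj X)) ∧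
    (∀ X : C, H.μ.app (G.obj X) ≫ l' X
      = H.map (l' X) ≫ l' (H.obj X) ≫ G.map (H.μ.app X)) ∧
    (∀ X : C, H.map (G.μ.app X) ≫ l' X
      = l' (G.obj X) ≫ G.map (l' X) ≫ G.μ.app (H.obj X)) := by
  haveI : ∀ X, Epi (σ X) := σepi
  have σnat' : ∀ {X Y : C} (f : X ⟶ Y) {Z : C} (g : G.obj Y ⟶ Z),
      F.map f ≫ σ Y ≫ g = σ X ≫ G.map f ≫ g := by
    intro X Y f Z g; rw [← Category.assoc, σnat, Category.assoc]
  have hcompat' : ∀ (X : C) {Z : C} (g : G.obj (H.obj X) ⟶ Z),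
      H.map (σ X) ≫ l' X ≫ g = l X ≫ σ (H.obj X) ≫ g := by
    intro X Z g; rw [← Category.assoc, hcompat, Category.assoc]
  have lnat' : ∀ {X Y : C} (f : X ⟶ Y) {Z : C} (g : F.obj (H.obj Y) ⟶ Z),
      H.map (F.map f) ≫ l Y ≫ g = l X ≫ F.map (H.map f) ≫ g := by
    intro X Y f Z g; rw [← Category.assoc, lnat, Category.assoc]
  refine ⟨fun X => ?_, fun X => ?_, fun X => ?_, fun X => ?_⟩
  · -- U1
    rw [← cancel_epi (σ X), ← Category.assoc]
    rw [show σ X ≫ H.η.app (G.obj X) = H.η.app (F.obj X) ≫ H.map (σ X) from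
      H.η.naturality (σ X), Category.assoc, hcompat, ← Category.assoc, lU1, σnat]
    rfl
  · -- U2
    rw [show G.η.app X = F.η.app X ≫ σ X from (ση X).symm, H.toFunctor.map_comp,
      Category.assoc, hcompat, ← Category.assoc, lU2, ση]
  · -- M1
    rw [← cancel_epi (H.map (H.map (σ X)))]
    calc H.map (H.map (σ X)) ≫ H.μ.app (G.obj X) ≫ l' X
        = H.μ.app (F.obj X) ≫ H.map (σ X) ≫ l' X := by
          have h := H.μ.naturality (σ X)
          simp only [Functor.comp_map] at h
          rw [← Category.assoc, h, Category.assoc]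
      _ = H.μ.app (F.obj X) ≫ l X ≫ σ (H.obj X) := by rw [hcompat]
      _ = (H.map (l X) ≫ l (H.obj X) ≫ F.map (H.μ.app X)) ≫ σ (H.obj X) := by
          rw [← Category.assoc, lM1]
      _ = H.map (l X) ≫ l (H.obj X) ≫ σ (H.obj (H.obj X)) ≫ G.map (H.μ.app X) := by
          simp only [Category.assoc]; rw [σnat]
      _ = H.map (l X) ≫ H.map (σ (H.obj X)) ≫ l' (H.obj X) ≫ G.map (H.μ.app X) := by
          rw [hcompat' (H.obj X)]
      _ = H.map (H.map (σ X)) ≫ H.map (l' X) ≫ l' (H.obj X) ≫ G.map (H.μ.app X) := by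
          rw [← H.toFunctor.map_comp_assoc, ← hcompat, H.toFunctor.map_comp_assoc]
  · -- M2
    haveI : Epi (F.map (σ X) ≫ σ (G.obj X)) := epi_comp _ _
    rw [← cancel_epi (H.map (F.map (σ X) ≫ σ (G.obj X)))]
    have key : F.map (σ X) ≫ σ (G.obj X) ≫ G.μ.app X = F.μ.app X ≫ σ X := by
      rw [σnat' (σ X), σμ]
    calc H.map (F.map (σ X) ≫ σ (G.obj X)) ≫ H.map (G.μ.app X) ≫ l' X
        = H.map (F.μ.app X ≫ σ X) ≫ l' X := by
          rw [← H.toFunctor.map_comp_assoc]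
          rw [show (F.map (σ X) ≫ σ (G.obj X)) ≫ G.μ.app X = F.μ.app X ≫ σ X by
            rw [Category.assoc, key]]
      _ = H.map (F.μ.app X) ≫ l X ≫ σ (H.obj X) := by
          rw [H.toFunctor.map_comp, Category.assoc, hcompat]
      _ = (l (F.obj X) ≫ F.map (l X) ≫ F.μ.app (H.obj X)) ≫ σ (H.obj X) := by
          rw [← Category.assoc, lM2]
      _ = l (F.obj X) ≫ F.map (l X) ≫ F.map (σ (H.obj X)) ≫ σ (G.obj (H.obj X))
            ≫ G.μ.app (H.obj X) := by
          simp only [Category.assoc]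
          rw [show F.μ.app (H.obj X) ≫ σ (H.obj X)
              = F.map (σ (H.obj X)) ≫ σ (G.obj (H.obj X)) ≫ G.μ.app (H.obj X) by
            rw [σnat' (σ (H.obj X)), σμ]]
      _ = l (F.obj X) ≫ F.map (H.map (σ X)) ≫ F.map (l' X) ≫ σ (G.obj (H.obj X))
            ≫ G.μ.app (H.obj X) := by
          rw [← F.toFunctor.map_comp_assoc, ← hcompat, F.toFunctor.map_comp_assoc]
      _ = H.map (F.map (σ X)) ≫ l (G.obj X) ≫ F.map (l' X) ≫ σ (G.obj (H.obj X))
            ≫ G.μ.app (H.obj X) := by rw [lnat' (σ X)]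
      _ = H.map (F.map (σ X) ≫ σ (G.obj X)) ≫ l' (G.obj X) ≫ G.map (l' X)
            ≫ G.μ.app (H.obj X) := by
          rw [H.toFunctor.map_comp_assoc, hcompat' (G.obj X), ← σnat' (l' X)]
end
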